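/- arXiv:1408.5031 — 2 statements merged into one kernel-verified Lean document; each statement's English description precedes it below -/
import Mathlib

section
/- Let α, β, f, g be as follows: α : [0,T]×Ω → ℝ smooth positive, f, g : [0,T]×Ω → ℝ smooth, β ≥ 0, Ω ⊂ ℝ a bounded interval, and let u be a smooth solution of α u_tt − u_xx − β u_txx = f u_t + g on (0,T)×Ω. Then for all t ∈ [0,T], ½(‖√(α(t)) u_t(t)‖²_{L²(Ω)} + ‖u_x(t)‖²_{L²(Ω)}) + β∫₀ᵗ ‖u_tx(s)‖²_{L²(Ω)} ds = ½(‖√(α(0)) u_t(0)‖²_{L²(Ω)} + ‖u_x(0)‖²_{L²(Ω)}) + ∫₀ᵗ∫_Ω ((f + ½α_t)(u_t)² + g u_t) dx ds + ∫₀ᵗ [ (u + βu_t)_x u_t ]_{∂Ω} ds, where [h]_{∂Ω} denotes the boundary evaluation h(b) − h(a) for Ω = (a,b). -/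
open MeasureTheory Function

noncomputable def pd1 (F : ℝ → ℝ → ℝ) (t x : ℝ) : ℝ := deriv (fun s => F s x) t
noncomputable def pd2 (F : ℝ → ℝ → ℝ) (t x : ℝ) : ℝ := deriv (fun y => F t y) x

section helpers
variable {F : ℝ → ℝ → ℝ}

lemma hasDerivAt_fst' (hF : ContDiff ℝ (⊤ : ℕ∞) (uncurry F)) (t x : ℝ) :
    HasDerivAt (fun s => F s x) (fderiv ℝ (uncurry F) (t, x) (1, 0)) t := by
  have h := (hF.differentiable (by simp) (t, x)).hasFDerivAt
  have h2 : HasDerivAt (fun s : ℝ => (s, x)) ((1 : ℝ), (0 : ℝ)) t :=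
    (hasDerivAt_id t).prodMk (hasDerivAt_const t x)
  exact h.comp_hasDerivAt t h2

lemma hasDerivAt_snd' (hF : ContDiff ℝ (⊤ : ℕ∞) (uncurry F)) (t x : ℝ) :
    HasDerivAt (fun y => F t y) (fderiv ℝ (uncurry F) (t, x) (0, 1)) x := by
  have h := (hF.differentiable (by simp) (t, x)).hasFDerivAt
  have h2 : HasDerivAt (fun y : ℝ => (t, y)) ((0 : ℝ), (1 : ℝ)) x :=
    (hasDerivAt_const x t).prodMk (hasDerivAt_id x)
  exact h.comp_hasDerivAt x h2

lemma hasDerivAt_pd1 (hF : ContDiff ℝ (⊤ : ℕ∞) (uncurry F)) (t x : ℝ) :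
    HasDerivAt (fun s => F s x) (pd1 F t x) t :=
  hasDerivAt_deriv_iff.mpr (hasDerivAt_fst' hF t x).differentiableAt

lemma hasDerivAt_pd2 (hF : ContDiff ℝ (⊤ : ℕ∞) (uncurry F)) (t x : ℝ) :
    HasDerivAt (fun y => F t y) (pd2 F t x) x :=
  hasDerivAt_deriv_iff.mpr (hasDerivAt_snd' hF t x).differentiableAt

lemma contDiff_pd1 (hF : ContDiff ℝ (⊤ : ℕ∞) (uncurry F)) :
    ContDiff ℝ (⊤ : ℕ∞) (uncurry (pd1 F)) := by
  have he : uncurry (pd1 F) = fun p : ℝ × ℝ => fderiv ℝ (uncurry F) p (1, 0) := by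
    funext p
    exact (hasDerivAt_fst' hF p.1 p.2).deriv
  rw [he]
  exact (hF.fderiv_right (by simp)).clm_apply contDiff_const

lemma contDiff_pd2 (hF : ContDiff ℝ (⊤ : ℕ∞) (uncurry F)) :
    ContDiff ℝ (⊤ : ℕ∞) (uncurry (pd2 F)) := by
  have he : uncurry (pd2 F) = fun p : ℝ × ℝ => fderiv ℝ (uncurry F) p (0, 1) := by
    funext p
    exact (hasDerivAt_snd' hF p.1 p.2).deriv
  rw [he]
  exact (hF.fderiv_right (by simp)).clm_apply contDiff_const

lemma clairaut (hF : ContDiff ℝ (⊤ : ℕ∞) (uncurry F)) (t x : ℝ) :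
    pd1 (pd2 F) t x = pd2 (pd1 F) t x := by
  set G := fderiv ℝ (uncurry F) with hG
  have hGd : Differentiable ℝ G := (hF.fderiv_right (m := (⊤ : ℕ∞)) (by simp)).differentiable (by simp)
  have hH : HasFDerivAt G (fderiv ℝ G (t, x)) (t, x) := (hGd (t, x)).hasFDerivAt
  set H := fderiv ℝ G (t, x)
  have hsymm : H (1, 0) (0, 1) = H (0, 1) (1, 0) :=
    second_derivative_symmetric (f := uncurry F) (f' := G)
      (fun y => (hF.differentiable (by simp) y).hasFDerivAt) hH _ _
  have h1 : pd1 (pd2 F) t x = H (1, 0) (0, 1) := by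
    have hc : HasDerivAt (fun s : ℝ => G (s, x)) (H (1, 0)) t := by
      have h2 : HasDerivAt (fun s : ℝ => (s, x)) ((1 : ℝ), (0 : ℝ)) t :=
        (hasDerivAt_id t).prodMk (hasDerivAt_const t x)
      exact hH.comp_hasDerivAt t h2
    have hc2 : HasDerivAt (fun s : ℝ => G (s, x) (0, 1)) (H (1, 0) (0, 1)) t := by
      simpa using hc.clm_apply (hasDerivAt_const t ((0 : ℝ), (1 : ℝ)))
    have he : (fun s : ℝ => pd2 F s x) = fun s : ℝ => G (s, x) (0, 1) := by
      funext s; exact (hasDerivAt_snd' hF s x).deriv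
    rw [pd1, he]; exact hc2.deriv
  have h2 : pd2 (pd1 F) t x = H (0, 1) (1, 0) := by
    have hc : HasDerivAt (fun y : ℝ => G (t, y)) (H (0, 1)) x := by
      have h2 : HasDerivAt (fun y : ℝ => (t, y)) ((0 : ℝ), (1 : ℝ)) x :=
        (hasDerivAt_const x t).prodMk (hasDerivAt_id x)
      exact hH.comp_hasDerivAt x h2
    have hc2 : HasDerivAt (fun y : ℝ => G (t, y) (1, 0)) (H (0, 1) (1, 0)) x := by
      simpa using hc.clm_apply (hasDerivAt_const x ((1 : ℝ), (0 : ℝ)))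
    have he : (fun y : ℝ => pd1 F t y) = fun y : ℝ => G (t, y) (1, 0) := by
      funext y; exact (hasDerivAt_fst' hF t y).deriv
    rw [pd2, he]; exact hc2.deriv
  rw [h1, h2, hsymm]

lemma contX (hF : ContDiff ℝ (⊤ : ℕ∞) (uncurry F)) (s : ℝ) : Continuous fun x => F s x :=
  hF.continuous.comp (continuous_const.prodMk continuous_id)

lemma contT (hF : ContDiff ℝ (⊤ : ℕ∞) (uncurry F)) (x : ℝ) : Continuous fun s => F s x :=
  hF.continuous.comp (continuous_id.prodMk continuous_const)

end helpers

lemma swap_lemma {H : ℝ → ℝ → ℝ} (hH : Continuous (uncurry H)) {t a b : ℝ}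
    (h0t : (0:ℝ) ≤ t) (hab : a ≤ b) :
    ∫ x in a..b, ∫ s in (0:ℝ)..t, H s x = ∫ s in (0:ℝ)..t, ∫ x in a..b, H s x := by
  rw [intervalIntegral.integral_of_le hab, intervalIntegral.integral_of_le h0t]
  simp_rw [intervalIntegral.integral_of_le hab, intervalIntegral.integral_of_le h0t]
  have hint : Integrable (uncurry fun x s => H s x)
      ((volume.restrict (Set.Ioc a b)).prod (volume.restrict (Set.Ioc 0 t))) := by
    rw [Measure.prod_restrict]
    have hc : Continuous (uncurry fun x s => H s x) := hH.comp continuous_swap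
    refine (hc.continuousOn.integrableOn_compact
      (isCompact_Icc (a := (a, 0)) (b := (b, t)))).mono_set ?_
    rw [← Set.Icc_prod_Icc]
    exact Set.prod_mono Set.Ioc_subset_Icc_self Set.Ioc_subset_Icc_self
  exact integral_integral_swap hint

/-- Energy identity (energyid0) for the strongly damped inhomogeneous wave
equation α u_tt − u_xx − β u_txx = f u_t + g in one space dimension Ω = (a,b). -/
theorem stmt_11 (T a b β : ℝ) (hT : 0 < T) (hab : a < b) (hβ : 0 ≤ β)
    (α f g u : ℝ → ℝ → ℝ)
    (hαsmooth : ContDiff ℝ (⊤ : ℕ∞) (Function.uncurry α))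
    (hfsmooth : ContDiff ℝ (⊤ : ℕ∞) (Function.uncurry f))
    (hgsmooth : ContDiff ℝ (⊤ : ℕ∞) (Function.uncurry g))
    (husmooth : ContDiff ℝ (⊤ : ℕ∞) (Function.uncurry u))
    (hαpos : ∀ t ∈ Set.Icc (0 : ℝ) T, ∀ x ∈ Set.Icc a b, 0 < α t x)
    (hPDE : ∀ t ∈ Set.Icc (0 : ℝ) T, ∀ x ∈ Set.Icc a b,
      α t x * deriv (fun s => deriv (fun s' => u s' x) s) t
        - deriv (deriv (u t)) x
        - β * deriv (fun s => deriv (deriv (u s)) x) t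
      = f t x * deriv (fun s => u s x) t + g t x)
    (t : ℝ) (ht : t ∈ Set.Icc (0 : ℝ) T) :
    (1 / 2) * ((∫ x in a..b, α t x * (deriv (fun s => u s x) t) ^ 2)
        + ∫ x in a..b, (deriv (u t) x) ^ 2)
      + β * ∫ s in (0 : ℝ)..t, ∫ x in a..b,
          (deriv (fun s' => deriv (u s') x) s) ^ 2
    = (1 / 2) * ((∫ x in a..b, α 0 x * (deriv (fun s => u s x) 0) ^ 2)
        + ∫ x in a..b, (deriv (u 0) x) ^ 2)
      + (∫ s in (0 : ℝ)..t, ∫ x in a..b,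
          ((f s x + (1 / 2) * deriv (fun s' => α s' x) s)
              * (deriv (fun s' => u s' x) s) ^ 2
            + g s x * deriv (fun s' => u s' x) s))
      + ∫ s in (0 : ℝ)..t,
          ((deriv (u s) b + β * deriv (fun s' => deriv (u s') b) s)
              * deriv (fun s' => u s' b) s
            - (deriv (u s) a + β * deriv (fun s' => deriv (u s') a) s)
              * deriv (fun s' => u s' a) s) := by
  have ht0 : (0:ℝ) ≤ t := ht.1
  have htT : t ≤ T := ht.2
  have hab' : a ≤ b := hab.le
  -- smoothness of partial derivatives
  have hu1 : ContDiff ℝ (⊤ : ℕ∞) (uncurry (pd1 u)) := contDiff_pd1 husmooth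
  have hu2 : ContDiff ℝ (⊤ : ℕ∞) (uncurry (pd2 u)) := contDiff_pd2 husmooth
  have hu12 : ContDiff ℝ (⊤ : ℕ∞) (uncurry (pd1 (pd2 u))) := contDiff_pd1 hu2
  have hu22 : ContDiff ℝ (⊤ : ℕ∞) (uncurry (pd2 (pd2 u))) := contDiff_pd2 hu2
  have hu11 : ContDiff ℝ (⊤ : ℕ∞) (uncurry (pd1 (pd1 u))) := contDiff_pd1 hu1
  have hu122 : ContDiff ℝ (⊤ : ℕ∞) (uncurry (pd1 (pd2 (pd2 u)))) := contDiff_pd1 hu22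
  have hα1 : ContDiff ℝ (⊤ : ℕ∞) (uncurry (pd1 α)) := contDiff_pd1 hαsmooth
  -- spatial derivative of the flux u_t (u_x + β u_tx)
  have hD2 : ∀ s x : ℝ, HasDerivAt
      (fun y => pd1 u s y * (pd2 u s y + β * pd1 (pd2 u) s y))
      (pd1 (pd2 u) s x * (pd2 u s x + β * pd1 (pd2 u) s x)
        + pd1 u s x * (pd2 (pd2 u) s x + β * pd1 (pd2 (pd2 u)) s x)) x := by
    intro s x
    have h1 := hasDerivAt_pd2 hu1 s x
    have h2 := hasDerivAt_pd2 hu2 s x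
    have h3 := hasDerivAt_pd2 hu12 s x
    have h := h1.mul (h2.add (h3.const_mul β))
    rw [← clairaut husmooth s x, ← clairaut hu2 s x] at h
    exact h
  -- FTC in space: integral of the flux derivative equals the boundary term
  have hBnd : ∀ s : ℝ,
      (∫ x in a..b, (pd1 (pd2 u) s x * (pd2 u s x + β * pd1 (pd2 u) s x)
        + pd1 u s x * (pd2 (pd2 u) s x + β * pd1 (pd2 (pd2 u)) s x)))
      = pd1 u s b * (pd2 u s b + β * pd1 (pd2 u) s b)
        - pd1 u s a * (pd2 u s a + β * pd1 (pd2 u) s a) := by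
    intro s
    refine intervalIntegral.integral_eq_sub_of_hasDerivAt (fun x _ => hD2 s x) ?_
    apply Continuous.intervalIntegrable
    exact ((contX hu12 s).mul ((contX hu2 s).add (continuous_const.mul (contX hu12 s)))).add
      ((contX hu1 s).mul ((contX hu22 s).add (continuous_const.mul (contX hu122 s))))
  -- time derivative of the energy density
  have hD1 : ∀ s x : ℝ, HasDerivAt
      (fun s' => α s' x * (pd1 u s' x) ^ 2 + (pd2 u s' x) ^ 2)
      (pd1 α s x * (pd1 u s x) ^ 2 + α s x * (2 * pd1 u s x * pd1 (pd1 u) s x)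
        + 2 * pd2 u s x * pd1 (pd2 u) s x) s := by
    intro s x
    have h1 := hasDerivAt_pd1 hαsmooth s x
    have h2 := hasDerivAt_pd1 hu1 s x
    have h3 := hasDerivAt_pd1 hu2 s x
    have h := (h1.mul ((hasDerivAt_pd1 hu1 s x).pow 2)).add ((hasDerivAt_pd1 hu2 s x).pow 2)
    refine h.congr_deriv ?_
    simp only [Pi.pow_apply, Nat.cast_ofNat, Nat.reduceSub, pow_one]
  -- FTC in time pointwise in x
  have hFTCt : ∀ x : ℝ,
      (∫ s in (0:ℝ)..t, (pd1 α s x * (pd1 u s x) ^ 2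
          + α s x * (2 * pd1 u s x * pd1 (pd1 u) s x)
          + 2 * pd2 u s x * pd1 (pd2 u) s x))
      = (α t x * (pd1 u t x) ^ 2 + (pd2 u t x) ^ 2)
        - (α 0 x * (pd1 u 0 x) ^ 2 + (pd2 u 0 x) ^ 2) := by
    intro x
    refine intervalIntegral.integral_eq_sub_of_hasDerivAt (fun s _ => hD1 s x) ?_
    apply Continuous.intervalIntegrable
    exact (((contT hα1 x).mul ((contT hu1 x).pow 2)).add
        ((contT hαsmooth x).mul ((continuous_const.mul (contT hu1 x)).mul (contT hu11 x)))).add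
      ((continuous_const.mul (contT hu2 x)).mul (contT hu12 x))
  -- continuity of the time-derivative density in both variables
  have hD1cont : Continuous (uncurry fun s x =>
      pd1 α s x * (pd1 u s x) ^ 2 + α s x * (2 * pd1 u s x * pd1 (pd1 u) s x)
        + 2 * pd2 u s x * pd1 (pd2 u) s x) := by
    have c1 : Continuous fun p : ℝ × ℝ => pd1 α p.1 p.2 := hα1.continuous
    have c2 : Continuous fun p : ℝ × ℝ => pd1 u p.1 p.2 := hu1.continuous
    have c3 : Continuous fun p : ℝ × ℝ => α p.1 p.2 := hαsmooth.continuous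
    have c4 : Continuous fun p : ℝ × ℝ => pd1 (pd1 u) p.1 p.2 := hu11.continuous
    have c5 : Continuous fun p : ℝ × ℝ => pd2 u p.1 p.2 := hu2.continuous
    have c6 : Continuous fun p : ℝ × ℝ => pd1 (pd2 u) p.1 p.2 := hu12.continuous
    exact ((c1.mul (c2.pow 2)).add
        (c3.mul ((continuous_const.mul c2).mul c4))).add
      ((continuous_const.mul c5).mul c6)
  -- Fubini
  have hFub := swap_lemma hD1cont ht0 hab'
  -- pointwise identity using the PDE
  have hptw : ∀ s ∈ Set.uIcc (0:ℝ) t, ∀ x ∈ Set.uIcc a b,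
      pd1 α s x * (pd1 u s x) ^ 2 + α s x * (2 * pd1 u s x * pd1 (pd1 u) s x)
          + 2 * pd2 u s x * pd1 (pd2 u) s x
      = 2 * ((f s x + (1 / 2) * pd1 α s x) * (pd1 u s x) ^ 2 + g s x * pd1 u s x)
        + 2 * (pd1 (pd2 u) s x * (pd2 u s x + β * pd1 (pd2 u) s x)
          + pd1 u s x * (pd2 (pd2 u) s x + β * pd1 (pd2 (pd2 u)) s x))
        - 2 * β * (pd1 (pd2 u) s x) ^ 2 := by
    intro s hs x hx
    rw [Set.uIcc_of_le ht0] at hs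
    rw [Set.uIcc_of_le hab'] at hx
    have hp : α s x * pd1 (pd1 u) s x - pd2 (pd2 u) s x - β * pd1 (pd2 (pd2 u)) s x
        = f s x * pd1 u s x + g s x := hPDE s ⟨hs.1, hs.2.trans htT⟩ x hx
    linear_combination (2 * pd1 u s x) * hp
  -- inner integral identity for each time s
  have hInner : ∀ s ∈ Set.uIcc (0:ℝ) t,
      (∫ x in a..b, (pd1 α s x * (pd1 u s x) ^ 2
          + α s x * (2 * pd1 u s x * pd1 (pd1 u) s x)
          + 2 * pd2 u s x * pd1 (pd2 u) s x))
      = 2 * (∫ x in a..b, ((f s x + (1 / 2) * pd1 α s x) * (pd1 u s x) ^ 2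
            + g s x * pd1 u s x))
        + 2 * ((pd2 u s b + β * pd1 (pd2 u) s b) * pd1 u s b
          - (pd2 u s a + β * pd1 (pd2 u) s a) * pd1 u s a)
        - 2 * β * ∫ x in a..b, (pd1 (pd2 u) s x) ^ 2 := by
    intro s hs
    have cK : Continuous fun x => (f s x + (1 / 2) * pd1 α s x) * (pd1 u s x) ^ 2
        + g s x * pd1 u s x :=
      (((contX hfsmooth s).add (continuous_const.mul (contX hα1 s))).mul
        ((contX hu1 s).pow 2)).add ((contX hgsmooth s).mul (contX hu1 s))
    have cD2 : Continuous fun x => pd1 (pd2 u) s x * (pd2 u s x + β * pd1 (pd2 u) s x)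
        + pd1 u s x * (pd2 (pd2 u) s x + β * pd1 (pd2 (pd2 u)) s x) :=
      ((contX hu12 s).mul ((contX hu2 s).add (continuous_const.mul (contX hu12 s)))).add
        ((contX hu1 s).mul ((contX hu22 s).add (continuous_const.mul (contX hu122 s))))
    have cSq : Continuous fun x => (pd1 (pd2 u) s x) ^ 2 := (contX hu12 s).pow 2
    rw [intervalIntegral.integral_congr (g := fun x =>
      2 * ((f s x + (1 / 2) * pd1 α s x) * (pd1 u s x) ^ 2 + g s x * pd1 u s x)
        + 2 * (pd1 (pd2 u) s x * (pd2 u s x + β * pd1 (pd2 u) s x)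
          + pd1 u s x * (pd2 (pd2 u) s x + β * pd1 (pd2 (pd2 u)) s x))
        - 2 * β * (pd1 (pd2 u) s x) ^ 2) (fun x hx => hptw s hs x hx)]
    rw [intervalIntegral.integral_sub
      (by exact ((continuous_const.mul cK).add (continuous_const.mul cD2)).intervalIntegrable a b)
      (by exact (continuous_const.mul cSq).intervalIntegrable a b)]
    rw [intervalIntegral.integral_add (by exact (continuous_const.mul cK).intervalIntegrable a b)
      (by exact (continuous_const.mul cD2).intervalIntegrable a b)]
    rw [intervalIntegral.integral_const_mul, intervalIntegral.integral_const_mul,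
      intervalIntegral.integral_const_mul, hBnd s]
    ring
  -- continuity in time of the three parametric integrals
  have cKout : Continuous fun s => ∫ x in a..b,
      ((f s x + (1 / 2) * pd1 α s x) * (pd1 u s x) ^ 2 + g s x * pd1 u s x) := by
    apply intervalIntegral.continuous_parametric_intervalIntegral_of_continuous'
    have c1 : Continuous fun p : ℝ × ℝ => f p.1 p.2 := hfsmooth.continuous
    have c2 : Continuous fun p : ℝ × ℝ => pd1 α p.1 p.2 := hα1.continuous
    have c3 : Continuous fun p : ℝ × ℝ => pd1 u p.1 p.2 := hu1.continuous
    have c4 : Continuous fun p : ℝ × ℝ => g p.1 p.2 := hgsmooth.continuous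
    exact ((c1.add (continuous_const.mul c2)).mul (c3.pow 2)).add (c4.mul c3)
  have cBout : Continuous fun s =>
      (pd2 u s b + β * pd1 (pd2 u) s b) * pd1 u s b
        - (pd2 u s a + β * pd1 (pd2 u) s a) * pd1 u s a :=
    (((contT hu2 b).add (continuous_const.mul (contT hu12 b))).mul (contT hu1 b)).sub
      (((contT hu2 a).add (continuous_const.mul (contT hu12 a))).mul (contT hu1 a))
  have cJout : Continuous fun s => ∫ x in a..b, (pd1 (pd2 u) s x) ^ 2 := by
    apply intervalIntegral.continuous_parametric_intervalIntegral_of_continuous'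
    have c6 : Continuous fun p : ℝ × ℝ => pd1 (pd2 u) p.1 p.2 := hu12.continuous
    exact c6.pow 2
  -- outer integral identity
  have hOuter : (∫ s in (0:ℝ)..t, ∫ x in a..b,
        (pd1 α s x * (pd1 u s x) ^ 2 + α s x * (2 * pd1 u s x * pd1 (pd1 u) s x)
          + 2 * pd2 u s x * pd1 (pd2 u) s x))
      = 2 * (∫ s in (0:ℝ)..t, ∫ x in a..b,
            ((f s x + (1 / 2) * pd1 α s x) * (pd1 u s x) ^ 2 + g s x * pd1 u s x))
        + 2 * (∫ s in (0:ℝ)..t,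
            ((pd2 u s b + β * pd1 (pd2 u) s b) * pd1 u s b
              - (pd2 u s a + β * pd1 (pd2 u) s a) * pd1 u s a))
        - 2 * β * ∫ s in (0:ℝ)..t, ∫ x in a..b, (pd1 (pd2 u) s x) ^ 2 := by
    rw [intervalIntegral.integral_congr (g := fun s =>
      2 * (∫ x in a..b, ((f s x + (1 / 2) * pd1 α s x) * (pd1 u s x) ^ 2
            + g s x * pd1 u s x))
        + 2 * ((pd2 u s b + β * pd1 (pd2 u) s b) * pd1 u s b
          - (pd2 u s a + β * pd1 (pd2 u) s a) * pd1 u s a)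
        - 2 * β * ∫ x in a..b, (pd1 (pd2 u) s x) ^ 2) hInner]
    rw [intervalIntegral.integral_sub
      (by exact ((continuous_const.mul cKout).add (continuous_const.mul cBout)).intervalIntegrable 0 t)
      (by exact (continuous_const.mul cJout).intervalIntegrable 0 t)]
    rw [intervalIntegral.integral_add (by exact (continuous_const.mul cKout).intervalIntegrable 0 t)
      (by exact (continuous_const.mul cBout).intervalIntegrable 0 t)]
    rw [intervalIntegral.integral_const_mul, intervalIntegral.integral_const_mul,
      intervalIntegral.integral_const_mul]
  -- splitting of the energy integrals
  have hsplit : ∀ τ : ℝ, (∫ x in a..b, (α τ x * (pd1 u τ x) ^ 2 + (pd2 u τ x) ^ 2))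
      = (∫ x in a..b, α τ x * (pd1 u τ x) ^ 2) + ∫ x in a..b, (pd2 u τ x) ^ 2 := by
    intro τ
    exact intervalIntegral.integral_add
      (((contX hαsmooth τ).mul ((contX hu1 τ).pow 2)).intervalIntegrable a b)
      (((contX hu2 τ).pow 2).intervalIntegrable a b)
  -- key identity: energy difference equals double integral of D1
  have hkey : (∫ x in a..b, (α t x * (pd1 u t x) ^ 2 + (pd2 u t x) ^ 2))
      - (∫ x in a..b, (α 0 x * (pd1 u 0 x) ^ 2 + (pd2 u 0 x) ^ 2))
      = ∫ s in (0:ℝ)..t, ∫ x in a..b,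
          (pd1 α s x * (pd1 u s x) ^ 2 + α s x * (2 * pd1 u s x * pd1 (pd1 u) s x)
            + 2 * pd2 u s x * pd1 (pd2 u) s x) := by
    have cP : ∀ τ : ℝ, Continuous fun x => α τ x * (pd1 u τ x) ^ 2 + (pd2 u τ x) ^ 2 :=
      fun τ => ((contX hαsmooth τ).mul ((contX hu1 τ).pow 2)).add ((contX hu2 τ).pow 2)
    rw [← intervalIntegral.integral_sub (((cP t)).intervalIntegrable a b)
      (((cP 0)).intervalIntegrable a b)]
    rw [intervalIntegral.integral_congr (g := fun x => ∫ s in (0:ℝ)..t,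
      (pd1 α s x * (pd1 u s x) ^ 2 + α s x * (2 * pd1 u s x * pd1 (pd1 u) s x)
        + 2 * pd2 u s x * pd1 (pd2 u) s x)) (fun x _ => (hFTCt x).symm)]
    exact hFub
  -- final assembly
  show (1 / 2) * ((∫ x in a..b, α t x * (pd1 u t x) ^ 2)
        + ∫ x in a..b, (pd2 u t x) ^ 2)
      + β * ∫ s in (0:ℝ)..t, ∫ x in a..b, (pd1 (pd2 u) s x) ^ 2
    = (1 / 2) * ((∫ x in a..b, α 0 x * (pd1 u 0 x) ^ 2)
        + ∫ x in a..b, (pd2 u 0 x) ^ 2)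
      + (∫ s in (0:ℝ)..t, ∫ x in a..b,
          ((f s x + (1 / 2) * pd1 α s x) * (pd1 u s x) ^ 2 + g s x * pd1 u s x))
      + ∫ s in (0:ℝ)..t,
          ((pd2 u s b + β * pd1 (pd2 u) s b) * pd1 u s b
            - (pd2 u s a + β * pd1 (pd2 u) s a) * pd1 u s a)
  rw [hsplit t, hsplit 0, hOuter] at hkey
  linarith [hkey]
end

section
/- Let α : [0,T]×Ω → ℝ be smooth positive, f, g smooth, β ≥ 0, Ω = (a,b) ⊂ ℝ, and let u be a smooth solution of α u_tt − u_xx − β u_txx = f u_t + g on (0,T)×Ω. Then the higher-order energy E₁[u](t) := ½(‖√(α(t)) u_tt(t)‖²_{L²(Ω)} + ‖u_tx(t)‖²_{L²(Ω)}) satisfies E₁[u](t) + β∫₀ᵗ ‖u_ttx‖²_{L²(Ω)} ds = E₁[u](0) + ∫₀ᵗ∫_Ω ((f − ½α_t)(u_tt)² + (f_t u_t + g_t) u_tt) dx ds + ∫₀ᵗ [ (u_t + βu_tt)_x u_tt ]_{∂Ω} ds, where [h]_{∂Ω} = h(b) − h(a). -/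
open MeasureTheory

section EnergyAuxSection

open Function Set MeasureTheory


namespace EnergyAux1

noncomputable def pt (V : ℝ × ℝ → ℝ) : ℝ × ℝ → ℝ := fun p => fderiv ℝ V p (1, 0)
noncomputable def px (V : ℝ × ℝ → ℝ) : ℝ × ℝ → ℝ := fun p => fderiv ℝ V p (0, 1)

theorem contDiff_pd {V : ℝ × ℝ → ℝ} (hV : ContDiff ℝ (⊤ : ℕ∞) V) (v : ℝ × ℝ) :
    ContDiff ℝ (⊤ : ℕ∞) fun p => fderiv ℝ V p v :=
  (hV.fderiv_right (by simp)).clm_apply contDiff_const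

theorem contDiff_pt {V : ℝ × ℝ → ℝ} (hV : ContDiff ℝ (⊤ : ℕ∞) V) : ContDiff ℝ (⊤ : ℕ∞) (pt V) :=
  contDiff_pd hV _

theorem contDiff_px {V : ℝ × ℝ → ℝ} (hV : ContDiff ℝ (⊤ : ℕ∞) V) : ContDiff ℝ (⊤ : ℕ∞) (px V) :=
  contDiff_pd hV _

theorem hasDerivAt_pt {V : ℝ × ℝ → ℝ} (hV : ContDiff ℝ (⊤ : ℕ∞) V) (t x : ℝ) :
    HasDerivAt (fun s => V (s, x)) (pt V (t, x)) t := by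
  have h1 : HasDerivAt (fun s : ℝ => (s, x)) ((1 : ℝ), (0 : ℝ)) t :=
    (hasDerivAt_id t).prodMk (hasDerivAt_const t x)
  exact ((hV.differentiable (by simp) (t, x)).hasFDerivAt.comp_hasDerivAt t h1)

theorem hasDerivAt_px {V : ℝ × ℝ → ℝ} (hV : ContDiff ℝ (⊤ : ℕ∞) V) (t x : ℝ) :
    HasDerivAt (fun y => V (t, y)) (px V (t, x)) x := by
  have h1 : HasDerivAt (fun y : ℝ => (t, y)) ((0 : ℝ), (1 : ℝ)) x :=
    (hasDerivAt_const x t).prodMk (hasDerivAt_id x)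
  exact ((hV.differentiable (by simp) (t, x)).hasFDerivAt.comp_hasDerivAt x h1)

theorem deriv_pt {V : ℝ × ℝ → ℝ} (hV : ContDiff ℝ (⊤ : ℕ∞) V) (t x : ℝ) :
    deriv (fun s => V (s, x)) t = pt V (t, x) := (hasDerivAt_pt hV t x).deriv

theorem deriv_px {V : ℝ × ℝ → ℝ} (hV : ContDiff ℝ (⊤ : ℕ∞) V) (t x : ℝ) :
    deriv (fun y => V (t, y)) x = px V (t, x) := (hasDerivAt_px hV t x).deriv

theorem fderiv_pd {V : ℝ × ℝ → ℝ} (hV : ContDiff ℝ (⊤ : ℕ∞) V) (v w p : ℝ × ℝ) :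
    fderiv ℝ (fun q => fderiv ℝ V q v) p w = fderiv ℝ (fderiv ℝ V) p w v := by
  have hd2 : DifferentiableAt ℝ (fderiv ℝ V) p :=
    ((hV.fderiv_right (m := (⊤ : ℕ∞)) (by simp)).differentiable (by simp)) p
  have h := (ContinuousLinearMap.apply ℝ ℝ v).hasFDerivAt.comp p hd2.hasFDerivAt
  rw [show (fun q => fderiv ℝ V q v) = (ContinuousLinearMap.apply ℝ ℝ v) ∘ (fderiv ℝ V) from rfl,
    h.fderiv]
  rfl

theorem schwarz {V : ℝ × ℝ → ℝ} (hV : ContDiff ℝ (⊤ : ℕ∞) V) : pt (px V) = px (pt V) := by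
  funext p
  have hd : Differentiable ℝ V := hV.differentiable (by simp)
  have hd2 : DifferentiableAt ℝ (fderiv ℝ V) p :=
    ((hV.fderiv_right (m := (⊤ : ℕ∞)) (by simp)).differentiable (by simp)) p
  have hsym := second_derivative_symmetric_of_eventually_of_real
    (Filter.Eventually.of_forall fun y => (hd y).hasFDerivAt) hd2.hasFDerivAt
    ((1 : ℝ), (0 : ℝ)) ((0 : ℝ), (1 : ℝ))
  show fderiv ℝ (px V) p (1, 0) = fderiv ℝ (pt V) p (0, 1)
  rw [show px V = fun q => fderiv ℝ V q (0, 1) from rfl,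
    show pt V = fun q => fderiv ℝ V q (1, 0) from rfl,
    fderiv_pd hV _ _ p, fderiv_pd hV _ _ p]
  exact hsym

theorem fubini_aux {f : ℝ → ℝ → ℝ} (hf : Continuous (Function.uncurry f))
    {a b c d : ℝ} (hab : a ≤ b) (hcd : c ≤ d) :
    (∫ x in a..b, ∫ y in c..d, f x y) = ∫ y in c..d, ∫ x in a..b, f x y := by
  rw [intervalIntegral.integral_of_le hab, intervalIntegral.integral_of_le hcd]
  simp_rw [intervalIntegral.integral_of_le hcd, intervalIntegral.integral_of_le hab]
  apply MeasureTheory.integral_integral_swap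
  rw [Measure.prod_restrict, ← Measure.volume_eq_prod]
  exact ((hf.continuousOn).integrableOn_compact
    (isCompact_Icc.prod isCompact_Icc)).mono_set
    (Set.prod_mono Set.Ioc_subset_Icc_self Set.Ioc_subset_Icc_self)

theorem contSlice1 {V : ℝ × ℝ → ℝ} (hV : Continuous V) (τ : ℝ) :
    Continuous fun x : ℝ => V (τ, x) :=
  hV.comp (continuous_const.prodMk continuous_id)

theorem contSlice2 {V : ℝ × ℝ → ℝ} (hV : Continuous V) (x : ℝ) :
    Continuous fun s : ℝ => V (s, x) :=
  hV.comp (continuous_id.prodMk continuous_const)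

noncomputable def Dfun (A U : ℝ × ℝ → ℝ) : ℝ × ℝ → ℝ := fun p =>
  pt A p * (pt (pt U) p) ^ 2 + A p * (2 * pt (pt U) p * pt (pt (pt U)) p)
    + 2 * pt (px U) p * pt (pt (px U)) p

theorem continuous_D {A U : ℝ × ℝ → ℝ} (hA : ContDiff ℝ (⊤ : ℕ∞) A) (hU : ContDiff ℝ (⊤ : ℕ∞) U) :
    Continuous (Dfun A U) := by
  unfold Dfun
  exact (((contDiff_pt hA).continuous.mul
      (((contDiff_pt (contDiff_pt hU)).continuous).pow 2)).add
    (hA.continuous.mul ((continuous_const.mul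
      (contDiff_pt (contDiff_pt hU)).continuous).mul
      (contDiff_pt (contDiff_pt (contDiff_pt hU))).continuous))).add
    ((continuous_const.mul (contDiff_pt (contDiff_px hU)).continuous).mul
      (contDiff_pt (contDiff_pt (contDiff_px hU))).continuous)

theorem hasDerivAt_energy {A U : ℝ × ℝ → ℝ} (hA : ContDiff ℝ (⊤ : ℕ∞) A) (hU : ContDiff ℝ (⊤ : ℕ∞) U)
    (s x : ℝ) :
    HasDerivAt (fun s' => A (s', x) * (pt (pt U) (s', x)) ^ 2 + (pt (px U) (s', x)) ^ 2)
      (Dfun A U (s, x)) s := by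
  have h := ((hasDerivAt_pt hA s x).mul
      ((hasDerivAt_pt (contDiff_pt (contDiff_pt hU)) s x).pow 2)).add
    ((hasDerivAt_pt (contDiff_pt (contDiff_px hU)) s x).pow 2)
  refine h.congr_deriv ?_
  unfold Dfun
  push_cast
  simp only [Pi.pow_apply]
  ring

theorem ftc_energy {A U : ℝ × ℝ → ℝ} (hA : ContDiff ℝ (⊤ : ℕ∞) A) (hU : ContDiff ℝ (⊤ : ℕ∞) U)
    {a b t : ℝ} (hab : a ≤ b) (h0t : 0 ≤ t) :
    ((∫ x in a..b, A (t, x) * (pt (pt U) (t, x)) ^ 2) + ∫ x in a..b, (pt (px U) (t, x)) ^ 2)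
      - ((∫ x in a..b, A (0, x) * (pt (pt U) (0, x)) ^ 2)
        + ∫ x in a..b, (pt (px U) (0, x)) ^ 2)
    = ∫ s in (0 : ℝ)..t, ∫ x in a..b, Dfun A U (s, x) := by
  have cE : ∀ τ : ℝ, Continuous fun x =>
      A (τ, x) * (pt (pt U) (τ, x)) ^ 2 + (pt (px U) (τ, x)) ^ 2 := fun τ =>
    ((contSlice1 hA.continuous τ).mul
      ((contSlice1 (contDiff_pt (contDiff_pt hU)).continuous τ).pow 2)).add
      ((contSlice1 (contDiff_pt (contDiff_px hU)).continuous τ).pow 2)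
  have comb : ∀ τ : ℝ,
      ((∫ x in a..b, A (τ, x) * (pt (pt U) (τ, x)) ^ 2)
        + ∫ x in a..b, (pt (px U) (τ, x)) ^ 2)
      = ∫ x in a..b, (A (τ, x) * (pt (pt U) (τ, x)) ^ 2 + (pt (px U) (τ, x)) ^ 2) := by
    intro τ
    rw [← intervalIntegral.integral_add
      (((contSlice1 hA.continuous τ).fun_mul
        ((contSlice1 (contDiff_pt (contDiff_pt hU)).continuous τ).fun_pow 2)).intervalIntegrable _ _)
      (((contSlice1 (contDiff_pt (contDiff_px hU)).continuous τ).fun_pow 2).intervalIntegrable _ _)]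
  rw [comb t, comb 0,
    ← intervalIntegral.integral_sub ((cE t).intervalIntegrable _ _)
      ((cE 0).intervalIntegrable _ _)]
  have hptw : ∀ x : ℝ,
      (A (t, x) * (pt (pt U) (t, x)) ^ 2 + (pt (px U) (t, x)) ^ 2)
        - (A (0, x) * (pt (pt U) (0, x)) ^ 2 + (pt (px U) (0, x)) ^ 2)
      = ∫ s in (0 : ℝ)..t, Dfun A U (s, x) := by
    intro x
    exact (intervalIntegral.integral_eq_sub_of_hasDerivAt
      (fun s _ => hasDerivAt_energy hA hU s x)
      ((contSlice2 (continuous_D hA hU) x).intervalIntegrable _ _)).symm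
  rw [intervalIntegral.integral_congr (g := fun x => ∫ s in (0 : ℝ)..t, Dfun A U (s, x))
    (fun x _ => hptw x)]
  exact fubini_aux (f := fun x s => Dfun A U (s, x)) ((continuous_D hA hU).comp continuous_swap) hab h0t

end EnergyAux1

namespace EnergyAux1

theorem ibp_step {U : ℝ × ℝ → ℝ} (hU : ContDiff ℝ (⊤ : ℕ∞) U) {a b : ℝ} (hab : a ≤ b)
    (β s : ℝ) :
    (∫ x in a..b, (pt (pt U) (s, x) * (px (pt (px U)) (s, x) + β * px (pt (pt (px U))) (s, x))
        + pt (px U) (s, x) * pt (pt (px U)) (s, x)))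
    = ((pt (px U) (s, b) + β * pt (pt (px U)) (s, b)) * pt (pt U) (s, b)
        - (pt (px U) (s, a) + β * pt (pt (px U)) (s, a)) * pt (pt U) (s, a))
      - β * ∫ x in a..b, (pt (pt (px U)) (s, x)) ^ 2 := by
  have s3 : px (pt (pt U)) = pt (pt (px U)) :=
    (schwarz (contDiff_pt hU)).symm.trans (congrArg pt (schwarz hU).symm)
  have hu' : ∀ y ∈ uIcc a b, HasDerivAt (fun y' => pt (pt U) (s, y'))
      (pt (pt (px U)) (s, y)) y := by
    intro y _
    have h := hasDerivAt_px (contDiff_pt (contDiff_pt hU)) s y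
    rwa [congrFun s3 (s, y)] at h
  have hv' : ∀ y ∈ uIcc a b, HasDerivAt
      (fun y' => pt (px U) (s, y') + β * pt (pt (px U)) (s, y'))
      (px (pt (px U)) (s, y) + β * px (pt (pt (px U))) (s, y)) y := fun y _ =>
    (hasDerivAt_px (contDiff_pt (contDiff_px hU)) s y).add
      ((hasDerivAt_px (contDiff_pt (contDiff_pt (contDiff_px hU))) s y).const_mul β)
  have hint1 : IntervalIntegrable (fun y => pt (pt (px U)) (s, y)) volume a b :=
    (contSlice1 (contDiff_pt (contDiff_pt (contDiff_px hU))).continuous s).intervalIntegrable _ _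
  have hint2 : IntervalIntegrable
      (fun y => px (pt (px U)) (s, y) + β * px (pt (pt (px U))) (s, y)) volume a b :=
    ((contSlice1 (contDiff_px (contDiff_pt (contDiff_px hU))).continuous s).add
      (continuous_const.mul
        (contSlice1 (contDiff_px (contDiff_pt (contDiff_pt (contDiff_px hU)))).continuous s))).intervalIntegrable _ _
  have h := intervalIntegral.integral_mul_deriv_eq_deriv_mul hu' hv' hint1 hint2
  have hsplit1 :
      (∫ x in a..b, (pt (pt U) (s, x) * (px (pt (px U)) (s, x) + β * px (pt (pt (px U))) (s, x))
        + pt (px U) (s, x) * pt (pt (px U)) (s, x)))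
      = (∫ x in a..b, pt (pt U) (s, x)
            * (px (pt (px U)) (s, x) + β * px (pt (pt (px U))) (s, x)))
        + ∫ x in a..b, pt (px U) (s, x) * pt (pt (px U)) (s, x) := by
    rw [← intervalIntegral.integral_add
      (((contSlice1 (contDiff_pt (contDiff_pt hU)).continuous s).fun_mul
        ((contSlice1 (contDiff_px (contDiff_pt (contDiff_px hU))).continuous s).fun_add
          (continuous_const.fun_mul
            (contSlice1 (contDiff_px (contDiff_pt (contDiff_pt (contDiff_px hU)))).continuous s)))).intervalIntegrable _ _)
      (((contSlice1 (contDiff_pt (contDiff_px hU)).continuous s).fun_mul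
        (contSlice1 (contDiff_pt (contDiff_pt (contDiff_px hU))).continuous s)).intervalIntegrable _ _)]
  have hsplit2 :
      (∫ x in a..b, pt (pt (px U)) (s, x)
          * (pt (px U) (s, x) + β * pt (pt (px U)) (s, x)))
      = (∫ x in a..b, pt (px U) (s, x) * pt (pt (px U)) (s, x))
        + β * ∫ x in a..b, (pt (pt (px U)) (s, x)) ^ 2 := by
    rw [← intervalIntegral.integral_const_mul, ← intervalIntegral.integral_add
      (((contSlice1 (contDiff_pt (contDiff_px hU)).continuous s).fun_mul
        (contSlice1 (contDiff_pt (contDiff_pt (contDiff_px hU))).continuous s)).intervalIntegrable _ _)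
      ((continuous_const.fun_mul
        ((contSlice1 (contDiff_pt (contDiff_pt (contDiff_px hU))).continuous s).fun_pow 2)).intervalIntegrable _ _)]
    apply intervalIntegral.integral_congr
    intro x _
    ring
  rw [hsplit1, h, hsplit2]
  ring

theorem pde_diff {T a b β : ℝ} {A F G U : ℝ × ℝ → ℝ}
    (hA : ContDiff ℝ (⊤ : ℕ∞) A) (hF : ContDiff ℝ (⊤ : ℕ∞) F) (hG : ContDiff ℝ (⊤ : ℕ∞) G) (hU : ContDiff ℝ (⊤ : ℕ∞) U)
    (hPDE : ∀ s ∈ Icc (0 : ℝ) T, ∀ x ∈ Icc a b,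
      A (s, x) * pt (pt U) (s, x) - px (px U) (s, x) - β * pt (px (px U)) (s, x)
        = F (s, x) * pt U (s, x) + G (s, x))
    {s x : ℝ} (hs : s ∈ Ioo (0 : ℝ) T) (hx : x ∈ Icc a b) :
    pt A (s, x) * pt (pt U) (s, x) + A (s, x) * pt (pt (pt U)) (s, x)
      - px (pt (px U)) (s, x) - β * px (pt (pt (px U))) (s, x)
    = pt F (s, x) * pt U (s, x) + F (s, x) * pt (pt U) (s, x) + pt G (s, x) := by
  have s1 : pt (px (px U)) = px (pt (px U)) := schwarz (contDiff_px hU)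
  have s2 : pt (pt (px (px U))) = px (pt (pt (px U))) :=
    (congrArg pt s1).trans (schwarz (contDiff_pt (contDiff_px hU)))
  have hmem : Icc (0 : ℝ) T ∈ nhds s := Icc_mem_nhds hs.1 hs.2
  have heq : (fun s' => A (s', x) * pt (pt U) (s', x) - px (px U) (s', x)
        - β * pt (px (px U)) (s', x))
      =ᶠ[nhds s] fun s' => F (s', x) * pt U (s', x) + G (s', x) := by
    filter_upwards [hmem] with s' hs' using hPDE s' hs' x hx
  have hdL : HasDerivAt (fun s' => A (s', x) * pt (pt U) (s', x) - px (px U) (s', x)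
        - β * pt (px (px U)) (s', x))
      (pt A (s, x) * pt (pt U) (s, x) + A (s, x) * pt (pt (pt U)) (s, x)
        - pt (px (px U)) (s, x) - β * pt (pt (px (px U))) (s, x)) s :=
    (((hasDerivAt_pt hA s x).mul (hasDerivAt_pt (contDiff_pt (contDiff_pt hU)) s x)).sub
      (hasDerivAt_pt (contDiff_px (contDiff_px hU)) s x)).sub
      ((hasDerivAt_pt (contDiff_pt (contDiff_px (contDiff_px hU))) s x).const_mul β)
  have hdR : HasDerivAt (fun s' => F (s', x) * pt U (s', x) + G (s', x))
      (pt F (s, x) * pt U (s, x) + F (s, x) * pt (pt U) (s, x) + pt G (s, x)) s :=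
    ((hasDerivAt_pt hF s x).mul (hasDerivAt_pt (contDiff_pt hU) s x)).add
      (hasDerivAt_pt hG s x)
  have hde := heq.deriv_eq
  rw [hdL.deriv, hdR.deriv] at hde
  have e1 := congrFun s1 (s, x)
  have e2 := congrFun s2 (s, x)
  linear_combination hde + e1 + β * e2

end EnergyAux1

namespace EnergyAux1

theorem key (T a b β : ℝ) (hab : a ≤ b) (A F G U : ℝ × ℝ → ℝ)
    (hA : ContDiff ℝ (⊤ : ℕ∞) A) (hF : ContDiff ℝ (⊤ : ℕ∞) F) (hG : ContDiff ℝ (⊤ : ℕ∞) G) (hU : ContDiff ℝ (⊤ : ℕ∞) U)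
    (hPDE : ∀ s ∈ Icc (0 : ℝ) T, ∀ x ∈ Icc a b,
      A (s, x) * pt (pt U) (s, x) - px (px U) (s, x) - β * pt (px (px U)) (s, x)
        = F (s, x) * pt U (s, x) + G (s, x))
    (t : ℝ) (h0t : 0 ≤ t) (htT : t ≤ T) :
    (1 / 2) * ((∫ x in a..b, A (t, x) * (pt (pt U) (t, x)) ^ 2)
        + ∫ x in a..b, (pt (px U) (t, x)) ^ 2)
      + β * ∫ s in (0 : ℝ)..t, ∫ x in a..b, (pt (pt (px U)) (s, x)) ^ 2
    = (1 / 2) * ((∫ x in a..b, A (0, x) * (pt (pt U) (0, x)) ^ 2)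
        + ∫ x in a..b, (pt (px U) (0, x)) ^ 2)
      + (∫ s in (0 : ℝ)..t, ∫ x in a..b,
          ((F (s, x) - (1 / 2) * pt A (s, x)) * (pt (pt U) (s, x)) ^ 2
            + (pt F (s, x) * pt U (s, x) + pt G (s, x)) * pt (pt U) (s, x)))
      + ∫ s in (0 : ℝ)..t,
          ((pt (px U) (s, b) + β * pt (pt (px U)) (s, b)) * pt (pt U) (s, b)
            - (pt (px U) (s, a) + β * pt (pt (px U)) (s, a)) * pt (pt U) (s, a)) := by
  rcases eq_or_lt_of_le h0t with rfl | h0t'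
  · simp
  -- continuity of the parametric integrals
  have cRint : Continuous (uncurry fun (s : ℝ) (x : ℝ) =>
      (F (s, x) - (1 / 2) * pt A (s, x)) * (pt (pt U) (s, x)) ^ 2
        + (pt F (s, x) * pt U (s, x) + pt G (s, x)) * pt (pt U) (s, x)) := by
    have : Continuous fun p : ℝ × ℝ =>
        (F p - (1 / 2) * pt A p) * (pt (pt U) p) ^ 2
          + (pt F p * pt U p + pt G p) * pt (pt U) p :=
      (((hF.continuous.sub (continuous_const.mul (contDiff_pt hA).continuous)).mul
        ((contDiff_pt (contDiff_pt hU)).continuous.pow 2)).add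
        ((((contDiff_pt hF).continuous.mul (contDiff_pt hU).continuous).add
          (contDiff_pt hG).continuous).mul (contDiff_pt (contDiff_pt hU)).continuous))
    exact this
  have cZint : Continuous (uncurry fun (s : ℝ) (x : ℝ) => (pt (pt (px U)) (s, x)) ^ 2) := by
    have : Continuous fun p : ℝ × ℝ => (pt (pt (px U)) p) ^ 2 :=
      (contDiff_pt (contDiff_pt (contDiff_px hU))).continuous.pow 2
    exact this
  have hR : Continuous fun s => ∫ x in a..b,
      ((F (s, x) - (1 / 2) * pt A (s, x)) * (pt (pt U) (s, x)) ^ 2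
        + (pt F (s, x) * pt U (s, x) + pt G (s, x)) * pt (pt U) (s, x)) :=
    intervalIntegral.continuous_parametric_intervalIntegral_of_continuous' cRint a b
  have hZ : Continuous fun s => ∫ x in a..b, (pt (pt (px U)) (s, x)) ^ 2 :=
    intervalIntegral.continuous_parametric_intervalIntegral_of_continuous' cZint a b
  have hB : Continuous fun s =>
      ((pt (px U) (s, b) + β * pt (pt (px U)) (s, b)) * pt (pt U) (s, b)
        - (pt (px U) (s, a) + β * pt (pt (px U)) (s, a)) * pt (pt U) (s, a)) :=
    (((contSlice2 (contDiff_pt (contDiff_px hU)).continuous b).add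
      (continuous_const.mul (contSlice2 (contDiff_pt (contDiff_pt (contDiff_px hU))).continuous b))).mul
      (contSlice2 (contDiff_pt (contDiff_pt hU)).continuous b)).sub
      (((contSlice2 (contDiff_pt (contDiff_px hU)).continuous a).add
        (continuous_const.mul (contSlice2 (contDiff_pt (contDiff_pt (contDiff_px hU))).continuous a))).mul
        (contSlice2 (contDiff_pt (contDiff_pt hU)).continuous a))
  have hDcont : Continuous fun s => ∫ x in a..b, Dfun A U (s, x) :=
    intervalIntegral.continuous_parametric_intervalIntegral_of_continuous'
      (f := fun (s : ℝ) (x : ℝ) => Dfun A U (s, x)) (continuous_D hA hU) a b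
  -- pointwise inner identity on Ioo 0 t
  have hinner : ∀ s ∈ Ioo (0 : ℝ) t,
      (∫ x in a..b, Dfun A U (s, x))
      = 2 * (∫ x in a..b,
            ((F (s, x) - (1 / 2) * pt A (s, x)) * (pt (pt U) (s, x)) ^ 2
              + (pt F (s, x) * pt U (s, x) + pt G (s, x)) * pt (pt U) (s, x)))
        + 2 * ((pt (px U) (s, b) + β * pt (pt (px U)) (s, b)) * pt (pt U) (s, b)
            - (pt (px U) (s, a) + β * pt (pt (px U)) (s, a)) * pt (pt U) (s, a))
        - 2 * β * ∫ x in a..b, (pt (pt (px U)) (s, x)) ^ 2 := by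
    intro s hs
    have hsT : s ∈ Ioo (0 : ℝ) T := ⟨hs.1, lt_of_lt_of_le hs.2 htT⟩
    have hptw : ∀ x ∈ Icc a b, Dfun A U (s, x)
        = 2 * ((F (s, x) - (1 / 2) * pt A (s, x)) * (pt (pt U) (s, x)) ^ 2
            + (pt F (s, x) * pt U (s, x) + pt G (s, x)) * pt (pt U) (s, x))
          + 2 * (pt (pt U) (s, x)
              * (px (pt (px U)) (s, x) + β * px (pt (pt (px U))) (s, x))
            + pt (px U) (s, x) * pt (pt (px U)) (s, x)) := by
      intro x hx
      have hk := pde_diff hA hF hG hU hPDE hsT hx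
      unfold Dfun
      linear_combination 2 * pt (pt U) (s, x) * hk
    have step1 : (∫ x in a..b, Dfun A U (s, x))
        = ∫ x in a..b,
          (2 * ((F (s, x) - (1 / 2) * pt A (s, x)) * (pt (pt U) (s, x)) ^ 2
              + (pt F (s, x) * pt U (s, x) + pt G (s, x)) * pt (pt U) (s, x))
            + 2 * (pt (pt U) (s, x)
                * (px (pt (px U)) (s, x) + β * px (pt (pt (px U))) (s, x))
              + pt (px U) (s, x) * pt (pt (px U)) (s, x))) :=
      intervalIntegral.integral_congr
        (fun x hx => hptw x (by rwa [Set.uIcc_of_le hab] at hx))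
    have cI1 : Continuous fun x =>
        (F (s, x) - (1 / 2) * pt A (s, x)) * (pt (pt U) (s, x)) ^ 2
          + (pt F (s, x) * pt U (s, x) + pt G (s, x)) * pt (pt U) (s, x) :=
      contSlice1 cRint s
    have cI2 : Continuous fun x =>
        pt (pt U) (s, x) * (px (pt (px U)) (s, x) + β * px (pt (pt (px U))) (s, x))
          + pt (px U) (s, x) * pt (pt (px U)) (s, x) :=
      ((contSlice1 (contDiff_pt (contDiff_pt hU)).continuous s).mul
        ((contSlice1 (contDiff_px (contDiff_pt (contDiff_px hU))).continuous s).add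
          (continuous_const.mul
            (contSlice1 (contDiff_px (contDiff_pt (contDiff_pt (contDiff_px hU)))).continuous s)))).add
        ((contSlice1 (contDiff_pt (contDiff_px hU)).continuous s).mul
          (contSlice1 (contDiff_pt (contDiff_pt (contDiff_px hU))).continuous s))
    rw [step1, intervalIntegral.integral_add
        ((continuous_const.fun_mul cI1).intervalIntegrable _ _)
        ((continuous_const.fun_mul cI2).intervalIntegrable _ _),
      intervalIntegral.integral_const_mul, intervalIntegral.integral_const_mul,
      ibp_step hU hab β s]
    ring
  -- upgrade to Icc by continuity, then integrate
  have heqn : EqOn (fun s => ∫ x in a..b, Dfun A U (s, x))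
      (fun s =>
        2 * (∫ x in a..b,
            ((F (s, x) - (1 / 2) * pt A (s, x)) * (pt (pt U) (s, x)) ^ 2
              + (pt F (s, x) * pt U (s, x) + pt G (s, x)) * pt (pt U) (s, x)))
        + 2 * ((pt (px U) (s, b) + β * pt (pt (px U)) (s, b)) * pt (pt U) (s, b)
            - (pt (px U) (s, a) + β * pt (pt (px U)) (s, a)) * pt (pt U) (s, a))
        - 2 * β * ∫ x in a..b, (pt (pt (px U)) (s, x)) ^ 2) (Icc 0 t) := by
    rw [← closure_Ioo h0t'.ne]
    exact Set.EqOn.closure hinner hDcont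
      (((continuous_const.mul hR).add (continuous_const.mul hB)).sub
        (continuous_const.mul hZ))
  have hs2 : (∫ s in (0 : ℝ)..t, ∫ x in a..b, Dfun A U (s, x))
      = ∫ s in (0 : ℝ)..t,
        (2 * (∫ x in a..b,
            ((F (s, x) - (1 / 2) * pt A (s, x)) * (pt (pt U) (s, x)) ^ 2
              + (pt F (s, x) * pt U (s, x) + pt G (s, x)) * pt (pt U) (s, x)))
          + 2 * ((pt (px U) (s, b) + β * pt (pt (px U)) (s, b)) * pt (pt U) (s, b)
              - (pt (px U) (s, a) + β * pt (pt (px U)) (s, a)) * pt (pt U) (s, a))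
          - 2 * β * ∫ x in a..b, (pt (pt (px U)) (s, x)) ^ 2) :=
    intervalIntegral.integral_congr
      (fun s hsm => heqn (by rwa [Set.uIcc_of_le h0t] at hsm))
  have hsplit : (∫ s in (0 : ℝ)..t,
        (2 * (∫ x in a..b,
            ((F (s, x) - (1 / 2) * pt A (s, x)) * (pt (pt U) (s, x)) ^ 2
              + (pt F (s, x) * pt U (s, x) + pt G (s, x)) * pt (pt U) (s, x)))
          + 2 * ((pt (px U) (s, b) + β * pt (pt (px U)) (s, b)) * pt (pt U) (s, b)
              - (pt (px U) (s, a) + β * pt (pt (px U)) (s, a)) * pt (pt U) (s, a))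
          - 2 * β * ∫ x in a..b, (pt (pt (px U)) (s, x)) ^ 2))
      = 2 * (∫ s in (0 : ℝ)..t, ∫ x in a..b,
            ((F (s, x) - (1 / 2) * pt A (s, x)) * (pt (pt U) (s, x)) ^ 2
              + (pt F (s, x) * pt U (s, x) + pt G (s, x)) * pt (pt U) (s, x)))
        + 2 * (∫ s in (0 : ℝ)..t,
            ((pt (px U) (s, b) + β * pt (pt (px U)) (s, b)) * pt (pt U) (s, b)
              - (pt (px U) (s, a) + β * pt (pt (px U)) (s, a)) * pt (pt U) (s, a)))
        - 2 * β * ∫ s in (0 : ℝ)..t, ∫ x in a..b, (pt (pt (px U)) (s, x)) ^ 2 := by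
    rw [intervalIntegral.integral_sub
        (((continuous_const.fun_mul hR).fun_add (continuous_const.fun_mul hB)).intervalIntegrable _ _)
        ((continuous_const.fun_mul hZ).intervalIntegrable _ _),
      intervalIntegral.integral_add
        ((continuous_const.fun_mul hR).intervalIntegrable _ _)
        ((continuous_const.fun_mul hB).intervalIntegrable _ _),
      intervalIntegral.integral_const_mul, intervalIntegral.integral_const_mul,
      intervalIntegral.integral_const_mul]
  have h1 := ftc_energy hA hU hab h0t
  rw [hs2, hsplit] at h1
  linarith [h1]

end EnergyAux1


end EnergyAuxSection

open EnergyAux1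

/-- Higher-order energy identity (energyid1) for the strongly damped wave
equation α u_tt − u_xx − β u_txx = f u_t + g, Ω = (a,b). -/
theorem stmt_12 (T a b β : ℝ) (hT : 0 < T) (hab : a < b) (hβ : 0 ≤ β)
    (α f g u : ℝ → ℝ → ℝ)
    (hαsmooth : ContDiff ℝ (⊤ : ℕ∞) (Function.uncurry α))
    (hfsmooth : ContDiff ℝ (⊤ : ℕ∞) (Function.uncurry f))
    (hgsmooth : ContDiff ℝ (⊤ : ℕ∞) (Function.uncurry g))
    (husmooth : ContDiff ℝ (⊤ : ℕ∞) (Function.uncurry u))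
    (hαpos : ∀ t ∈ Set.Icc (0 : ℝ) T, ∀ x ∈ Set.Icc a b, 0 < α t x)
    (hPDE : ∀ t ∈ Set.Icc (0 : ℝ) T, ∀ x ∈ Set.Icc a b,
      α t x * deriv (fun s => deriv (fun s' => u s' x) s) t
        - deriv (deriv (u t)) x
        - β * deriv (fun s => deriv (deriv (u s)) x) t
      = f t x * deriv (fun s => u s x) t + g t x)
    (t : ℝ) (ht : t ∈ Set.Icc (0 : ℝ) T) :
    (1 / 2) * ((∫ x in a..b,
          α t x * (deriv (fun s => deriv (fun s' => u s' x) s) t) ^ 2)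
        + ∫ x in a..b, (deriv (fun s => deriv (u s) x) t) ^ 2)
      + β * ∫ s in (0 : ℝ)..t, ∫ x in a..b,
          (deriv (fun s' => deriv (fun s'' => deriv (u s'') x) s') s) ^ 2
    = (1 / 2) * ((∫ x in a..b,
          α 0 x * (deriv (fun s => deriv (fun s' => u s' x) s) 0) ^ 2)
        + ∫ x in a..b, (deriv (fun s => deriv (u s) x) 0) ^ 2)
      + (∫ s in (0 : ℝ)..t, ∫ x in a..b,
          ((f s x - (1 / 2) * deriv (fun s' => α s' x) s)
              * (deriv (fun s' => deriv (fun s'' => u s'' x) s') s) ^ 2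
            + (deriv (fun s' => f s' x) s * deriv (fun s' => u s' x) s
                + deriv (fun s' => g s' x) s)
              * deriv (fun s' => deriv (fun s'' => u s'' x) s') s))
      + ∫ s in (0 : ℝ)..t,
          ((deriv (fun s' => deriv (u s') b) s
              + β * deriv (fun s' => deriv (fun s'' => deriv (u s'') b) s') s)
              * deriv (fun s' => deriv (fun s'' => u s'' b) s') s
            - (deriv (fun s' => deriv (u s') a) s
              + β * deriv (fun s' => deriv (fun s'' => deriv (u s'') a) s') s)
              * deriv (fun s' => deriv (fun s'' => u s'' a) s') s) := by
  have e1 : ∀ (t x : ℝ), deriv (fun s => u s x) t = pt (Function.uncurry u) (t, x) :=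
    fun t x => deriv_pt husmooth t x
  have e1' : ∀ (t x : ℝ), deriv (fun s => pt (Function.uncurry u) (s, x)) t
      = pt (pt (Function.uncurry u)) (t, x) :=
    fun t x => deriv_pt (contDiff_pt husmooth) t x
  have ex : ∀ (s x : ℝ), deriv (u s) x = px (Function.uncurry u) (s, x) :=
    fun s x => deriv_px husmooth s x
  have ex' : ∀ (s x : ℝ), deriv (fun s' => px (Function.uncurry u) (s', x)) s
      = pt (px (Function.uncurry u)) (s, x) :=
    fun s x => deriv_pt (contDiff_px husmooth) s x
  have eptpx' : ∀ (s x : ℝ), deriv (fun s' => pt (px (Function.uncurry u)) (s', x)) s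
      = pt (pt (px (Function.uncurry u))) (s, x) :=
    fun s x => deriv_pt (contDiff_pt (contDiff_px husmooth)) s x
  have exx0 : ∀ (t x : ℝ), deriv (deriv (u t)) x = px (px (Function.uncurry u)) (t, x) := by
    intro t x
    have h : deriv (u t) = fun y => px (Function.uncurry u) (t, y) := funext fun y => ex t y
    rw [h]
    exact deriv_px (contDiff_px husmooth) t x
  have epxx' : ∀ (t x : ℝ), deriv (fun s => px (px (Function.uncurry u)) (s, x)) t
      = pt (px (px (Function.uncurry u))) (t, x) :=
    fun t x => deriv_pt (contDiff_px (contDiff_px husmooth)) t x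
  have eα : ∀ (s x : ℝ), deriv (fun s' => α s' x) s = pt (Function.uncurry α) (s, x) :=
    fun s x => deriv_pt hαsmooth s x
  have ef : ∀ (s x : ℝ), deriv (fun s' => f s' x) s = pt (Function.uncurry f) (s, x) :=
    fun s x => deriv_pt hfsmooth s x
  have eg : ∀ (s x : ℝ), deriv (fun s' => g s' x) s = pt (Function.uncurry g) (s, x) :=
    fun s x => deriv_pt hgsmooth s x
  have hPDE' : ∀ s ∈ Set.Icc (0 : ℝ) T, ∀ x ∈ Set.Icc a b,
      Function.uncurry α (s, x) * pt (pt (Function.uncurry u)) (s, x)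
        - px (px (Function.uncurry u)) (s, x)
        - β * pt (px (px (Function.uncurry u))) (s, x)
      = Function.uncurry f (s, x) * pt (Function.uncurry u) (s, x)
        + Function.uncurry g (s, x) := by
    intro s hs x hx
    have h := hPDE s hs x hx
    simp only [e1, e1', ex, ex', exx0, epxx'] at h
    exact h
  simp only [e1, e1', ex, ex', eptpx', exx0, epxx', eα, ef, eg]
  exact key T a b β hab.le (Function.uncurry α) (Function.uncurry f) (Function.uncurry g)
    (Function.uncurry u) hαsmooth hfsmooth hgsmooth husmooth hPDE' t ht.1 ht.2
end
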